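/- Let N ≥ 1, Δt > 0, and let a, b ∈ ℂ^N satisfy the implicit midpoint scheme with periodic boundary conditions, i.e. with the index conventions a_0 = a_N, a_{N+1} = a_1, b_0 = b_N, b_{N+1} = b_1: for each j = 1,…,N, b_j = a_j + Δt·( −i|m_j|² m_j + 2i \bar{m_j}( m_{j−1}² + m_{j+1}² ) ), where m_j = (a_j + b_j)/2. Then Σ_{j=1}^N |b_j|² = Σ_{j=1}^N |a_j|². -/
import Mathlib
set_option maxHeartbeats 1000000

lemma imp_mid_aux (Δt : ℝ) (u v w aa bb : ℂ)
    (hv : v = (aa + bb) / 2)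
    (hs : bb = aa + (Δt : ℂ) *
        (-Complex.I * ((Complex.normSq v : ℂ)) * v
          + 2 * Complex.I * (starRingEnd ℂ) v * (u ^ 2 + w ^ 2))) :
    Complex.normSq bb = Complex.normSq aa
      + 4 * Δt * ((Complex.I * ((starRingEnd ℂ) v) ^ 2 * u ^ 2).re
        - (Complex.I * ((starRingEnd ℂ) w) ^ 2 * v ^ 2).re) := by
  set F : ℂ := -Complex.I * ((Complex.normSq v : ℂ)) * v
      + 2 * Complex.I * (starRingEnd ℂ) v * (u ^ 2 + w ^ 2) with hF
  have hbb : bb = v + ((Δt / 2 : ℝ) : ℂ) * F := by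
    push_cast
    linear_combination hs / 2 - hv
  have haa : aa = v - ((Δt / 2 : ℝ) : ℂ) * F := by
    push_cast
    linear_combination -hs / 2 - hv
  rw [hbb, haa, hF]
  simp only [Complex.normSq_apply, Complex.add_re, Complex.add_im, Complex.sub_re,
    Complex.sub_im, Complex.mul_re, Complex.mul_im, Complex.ofReal_re, Complex.ofReal_im,
    Complex.I_re, Complex.I_im, Complex.conj_re, Complex.conj_im, Complex.neg_re,
    Complex.neg_im, pow_two, Complex.re_ofNat, Complex.im_ofNat]
  ring

/-- The implicit midpoint scheme for the toy model system with
periodic boundary conditions (`a 0 = a N`, `a (N+1) = a 1`, similarly for `b`)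
exactly conserves the mass `∑ |b_j|²`. -/
theorem implicit_midpoint_mass_conservation_periodic
    (N : ℕ) (hN : 1 ≤ N) (Δt : ℝ) (hΔt : 0 < Δt)
    (a b m : ℕ → ℂ)
    (ha0 : a 0 = a N) (haN : a (N + 1) = a 1)
    (hb0 : b 0 = b N) (hbN : b (N + 1) = b 1)
    (hm : ∀ j, m j = (a j + b j) / 2)
    (hscheme : ∀ j ∈ Finset.Icc 1 N,
      b j = a j + (Δt : ℂ) *
        (-Complex.I * ((Complex.normSq (m j) : ℂ)) * m j
          + 2 * Complex.I * (starRingEnd ℂ) (m j) * ((m (j - 1)) ^ 2 + (m (j + 1)) ^ 2))) :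
    ∑ j ∈ Finset.Icc 1 N, Complex.normSq (b j)
      = ∑ j ∈ Finset.Icc 1 N, Complex.normSq (a j) := by
  set g : ℕ → ℝ := fun j => (Complex.I * ((starRingEnd ℂ) (m j)) ^ 2 * (m (j - 1)) ^ 2).re
    with hg
  have key : ∀ j ∈ Finset.Icc 1 N,
      Complex.normSq (b j) = Complex.normSq (a j) + 4 * Δt * (g j - g (j + 1)) := by
    intro j hj
    have h := imp_mid_aux Δt (m (j - 1)) (m j) (m (j + 1)) (a j) (b j) (hm j) (hscheme j hj)
    simpa [hg] using h
  have hm1 : m (N + 1) = m 1 := by rw [hm, hm, haN, hbN]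
  have hm0 : m 0 = m N := by rw [hm, hm, ha0, hb0]
  calc ∑ j ∈ Finset.Icc 1 N, Complex.normSq (b j)
      = ∑ j ∈ Finset.Icc 1 N, (Complex.normSq (a j) + 4 * Δt * (g j - g (j + 1))) :=
        Finset.sum_congr rfl key
    _ = ∑ j ∈ Finset.Icc 1 N, Complex.normSq (a j)
        + 4 * Δt * ∑ j ∈ Finset.Icc 1 N, (g j - g (j + 1)) := by
        rw [Finset.sum_add_distrib, Finset.mul_sum]
    _ = ∑ j ∈ Finset.Icc 1 N, Complex.normSq (a j) := by
        have htel : ∑ j ∈ Finset.Icc 1 N, (g j - g (j + 1)) = g 1 - g (N + 1) := by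
          have h1 : ∑ j ∈ Finset.Icc 1 N, (g j - g (j + 1))
              = ∑ i ∈ Finset.range N, (g (1 + i) - g (1 + i + 1)) := by
            rw [← Finset.Ico_add_one_right_eq_Icc, Finset.sum_Ico_eq_sum_range]
            simp
          rw [h1]
          have := Finset.sum_range_sub' (fun i => g (1 + i)) N
          simpa [add_comm, add_assoc, add_left_comm] using this
        have hgeq : g (N + 1) = g 1 := by
          simp only [hg, hm1, Nat.add_sub_cancel]
          rw [show (1 : ℕ) - 1 = 0 from rfl, hm0]
        rw [htel, hgeq]
        ring
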